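/- Let p be a unary predicate symbol. The sequent ∀x((p(x)⊃⊥)⊃⊥) → ∀x p(x) has a C-proof, but the sequent (∀x p(x))⊃⊥, ∀x((p(x)⊃⊥)⊃⊥) → ∀x p(x) does not have an I-proof. (Hence the syntactic restriction to D- and G-formulas is essential to the equivalence of classical provability of Γ → G with intuitionistic provability of G⊃⊥, Γ → G.) -/
import Mathlib


set_option maxHeartbeats 1000000

/-- Terms of a first-order language: variables (de Bruijn indices for
quantified variables) and constants. -/
inductive Tm : Type
  | var : ℕ → Tm
  | const : ℕ → Tm

namespace Tm

/-- Substitution of the term `u` for the variable with index `k`. -/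
def subst (k : ℕ) (u : Tm) : Tm → Tm
  | var n => if n = k then u else var n
  | const c => const c

/-- The constant `c` occurs in a term. -/
def constIn (c : ℕ) : Tm → Prop
  | var _ => False
  | const d => d = c

end Tm

/-- First-order formulas over the primitives ⊤, ⊥, ∧, ∨, ⊃, ∃, ∀.
Quantifiers are represented with de Bruijn indices. -/
inductive Fm : Type
  | top : Fm
  | bot : Fm
  | atom : ℕ → List Tm → Fm
  | conj : Fm → Fm → Fm
  | disj : Fm → Fm → Fm
  | imp : Fm → Fm → Fm
  | ex : Fm → Fm
  | all : Fm → Fm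

namespace Fm

/-- Substitution of a term for the variable with de Bruijn index `k`. -/
def subst (k : ℕ) (u : Tm) : Fm → Fm
  | top => top
  | bot => bot
  | atom p ts => atom p (ts.map (Tm.subst k u))
  | conj a b => conj (subst k u a) (subst k u b)
  | disj a b => disj (subst k u a) (subst k u b)
  | imp a b => imp (subst k u a) (subst k u b)
  | ex a => ex (subst (k + 1) u a)
  | all a => all (subst (k + 1) u a)

/-- `[t/x]B`: instantiation of the outermost bound variable of the body of a
quantified formula with the term `u`. -/
def inst (u : Tm) (a : Fm) : Fm := subst 0 u a

/-- Atomic formulas (⊤ and ⊥ are *not* atomic). -/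
def isAtom : Fm → Prop
  | atom _ _ => True
  | _ => False

/-- Formulas that need no right-introduction rule in a uniform/O_G proof:
atomic formulas and ⊥. -/
def neutral (F : Fm) : Prop := F.isAtom ∨ F = bot

/-- The constant `c` occurs in a formula. -/
def constIn (c : ℕ) : Fm → Prop
  | top => False
  | bot => False
  | atom _ ts => ∃ t ∈ ts, t.constIn c
  | conj a b => constIn c a ∨ constIn c b
  | disj a b => constIn c a ∨ constIn c b
  | imp a b => constIn c a ∨ constIn c b
  | ex a => constIn c a
  | all a => constIn c a

end Fm

/-- The eigenvariable (constant) `c` does not occur in the sequent `Γ → Δ`. -/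
def FreshSeq (c : ℕ) (Γ Δ : Multiset Fm) : Prop :=
  (∀ F ∈ Γ, ¬ F.constIn c) ∧ ∀ F ∈ Δ, ¬ F.constIn c

/-- The sequent `Γ → Δ` is an axiom: ⊤ ∈ Δ, or some `A` that is ⊥ or atomic
belongs to both `Γ` and `Δ`. -/
def AxSeq (Γ Δ : Multiset Fm) : Prop :=
  Fm.top ∈ Δ ∨ ∃ A : Fm, (A = Fm.bot ∨ A.isAtom) ∧ A ∈ Γ ∧ A ∈ Δ

/-- C-proofs: arbitrary derivations in the sequent calculus of the paper.
Sequents are pairs of multisets of formulas. -/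
inductive CProof : Multiset Fm → Multiset Fm → Type
  | ax {Γ Δ : Multiset Fm} (h : AxSeq Γ Δ) : CProof Γ Δ
  | contrL {B : Fm} {Γ Δ : Multiset Fm} (p : CProof (B ::ₘ B ::ₘ Γ) Δ) : CProof (B ::ₘ Γ) Δ
  | contrR {B : Fm} {Γ Δ : Multiset Fm} (p : CProof Γ (B ::ₘ B ::ₘ Δ)) : CProof Γ (B ::ₘ Δ)
  | botR {D : Fm} {Γ Δ : Multiset Fm} (p : CProof Γ (Fm.bot ::ₘ Δ)) : CProof Γ (D ::ₘ Δ)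
  | andL {B D : Fm} {Γ Δ : Multiset Fm} (p : CProof (B ::ₘ D ::ₘ (B.conj D) ::ₘ Γ) Δ) :
      CProof ((B.conj D) ::ₘ Γ) Δ
  | andR {B D : Fm} {Γ Δ : Multiset Fm} (p : CProof Γ (B ::ₘ Δ)) (q : CProof Γ (D ::ₘ Δ)) :
      CProof Γ ((B.conj D) ::ₘ Δ)
  | orL {B D : Fm} {Γ Δ : Multiset Fm} (p : CProof (B ::ₘ Γ) Δ) (q : CProof (D ::ₘ Γ) Δ) :
      CProof ((B.disj D) ::ₘ Γ) Δ
  | orR1 {B D : Fm} {Γ Δ : Multiset Fm} (p : CProof Γ (B ::ₘ Δ)) : CProof Γ ((B.disj D) ::ₘ Δ)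
  | orR2 {B D : Fm} {Γ Δ : Multiset Fm} (p : CProof Γ (D ::ₘ Δ)) : CProof Γ ((B.disj D) ::ₘ Δ)
  | impL {B D : Fm} {Γ Δ Θ : Multiset Fm} (p : CProof ((B.imp D) ::ₘ Γ) (B ::ₘ Δ))
      (q : CProof (D ::ₘ Γ) Θ) : CProof ((B.imp D) ::ₘ Γ) (Δ + Θ)
  | impR {B D : Fm} {Γ Δ : Multiset Fm} (p : CProof (B ::ₘ Γ) (D ::ₘ Δ)) :
      CProof Γ ((B.imp D) ::ₘ Δ)
  | allL {B : Fm} {Γ Δ : Multiset Fm} (t : Tm)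
      (p : CProof ((B.inst t) ::ₘ (Fm.all B) ::ₘ Γ) Δ) : CProof ((Fm.all B) ::ₘ Γ) Δ
  | exR {B : Fm} {Γ Δ : Multiset Fm} (t : Tm) (p : CProof Γ ((B.inst t) ::ₘ Δ)) :
      CProof Γ ((Fm.ex B) ::ₘ Δ)
  | exL {B : Fm} {Γ Δ : Multiset Fm} (c : ℕ) (hc : FreshSeq c ((Fm.ex B) ::ₘ Γ) Δ)
      (p : CProof ((B.inst (Tm.const c)) ::ₘ Γ) Δ) : CProof ((Fm.ex B) ::ₘ Γ) Δ
  | allR {B : Fm} {Γ Δ : Multiset Fm} (c : ℕ) (hc : FreshSeq c Γ ((Fm.all B) ::ₘ Δ))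
      (p : CProof Γ ((B.inst (Tm.const c)) ::ₘ Δ)) : CProof Γ ((Fm.all B) ::ₘ Δ)

namespace CProof

/-- An I-proof is a C-proof in which every sequent has exactly one formula in
its succedent. -/
def isI : ∀ (Γ Δ : Multiset Fm), CProof Γ Δ → Prop
  | _, _, @ax _ Δ _ => Multiset.card Δ = 1
  | _, _, @contrL _ _ Δ p => Multiset.card Δ = 1 ∧ isI _ _ p
  | _, _, @contrR B _ Δ p => Multiset.card (B ::ₘ Δ) = 1 ∧ isI _ _ p
  | _, _, @botR D _ Δ p => Multiset.card (D ::ₘ Δ) = 1 ∧ isI _ _ p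
  | _, _, @andL _ _ _ Δ p => Multiset.card Δ = 1 ∧ isI _ _ p
  | _, _, @andR B D _ Δ p q => Multiset.card ((B.conj D) ::ₘ Δ) = 1 ∧ isI _ _ p ∧ isI _ _ q
  | _, _, @orL _ _ _ Δ p q => Multiset.card Δ = 1 ∧ isI _ _ p ∧ isI _ _ q
  | _, _, @orR1 B D _ Δ p => Multiset.card ((B.disj D) ::ₘ Δ) = 1 ∧ isI _ _ p
  | _, _, @orR2 B D _ Δ p => Multiset.card ((B.disj D) ::ₘ Δ) = 1 ∧ isI _ _ p
  | _, _, @impL _ _ _ Δ Θ p q => Multiset.card (Δ + Θ) = 1 ∧ isI _ _ p ∧ isI _ _ q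
  | _, _, @impR B D _ Δ p => Multiset.card ((B.imp D) ::ₘ Δ) = 1 ∧ isI _ _ p
  | _, _, @allL _ _ Δ _ p => Multiset.card Δ = 1 ∧ isI _ _ p
  | _, _, @exR B _ Δ _ p => Multiset.card ((Fm.ex B) ::ₘ Δ) = 1 ∧ isI _ _ p
  | _, _, @exL _ _ Δ _ _ p => Multiset.card Δ = 1 ∧ isI _ _ p
  | _, _, @allR B _ Δ _ _ p => Multiset.card ((Fm.all B) ::ₘ Δ) = 1 ∧ isI _ _ p

end CProof

/-- Classical provability: `Γ ⊢_C F`. -/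
def CProv (Γ : Multiset Fm) (F : Fm) : Prop := Nonempty (CProof Γ ({F} : Multiset Fm))

/-- Intuitionistic provability: `Γ ⊢_I F`. -/
def IProv (Γ : Multiset Fm) (F : Fm) : Prop := ∃ p : CProof Γ ({F} : Multiset Fm), p.isI

namespace CProof

open Classical in
/-- The nonconstructiveness measure of a C-proof: the number of
nonconstructive occurrences of ∨-L and ⊃-R rules in it. -/
noncomputable def mu : ∀ (Γ Δ : Multiset Fm), CProof Γ Δ → ℕ
  | _, _, ax _ => 0
  | _, _, contrL p => mu _ _ p
  | _, _, contrR p => mu _ _ p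
  | _, _, botR p => mu _ _ p
  | _, _, andL p => mu _ _ p
  | _, _, andR p q => mu _ _ p + mu _ _ q
  | _, _, @orL B D Γ Δ p q =>
      mu _ _ p + mu _ _ q +
        (if ∃ F ∈ Δ, IProv (B ::ₘ Γ) F ∧ IProv (D ::ₘ Γ) F then 0 else 1)
  | _, _, orR1 p => mu _ _ p
  | _, _, orR2 p => mu _ _ p
  | _, _, impL p q => mu _ _ p + mu _ _ q
  | _, _, @impR B D Γ _ p => mu _ _ p + (if IProv (B ::ₘ Γ) D then 0 else 1)
  | _, _, allL _ p => mu _ _ p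
  | _, _, exR _ p => mu _ _ p
  | _, _, exL _ _ p => mu _ _ p
  | _, _, allR _ _ p => mu _ _ p

/-- The sequent `S → P` appears in the given C-proof. -/
def occursSeq : ∀ (Γ Δ : Multiset Fm), CProof Γ Δ → Multiset Fm → Multiset Fm → Prop
  | _, _, @ax Γ Δ _, S, P => Γ = S ∧ Δ = P
  | _, _, @contrL B Γ Δ p, S, P => ((B ::ₘ Γ) = S ∧ Δ = P) ∨ occursSeq _ _ p S P
  | _, _, @contrR B Γ Δ p, S, P => (Γ = S ∧ (B ::ₘ Δ) = P) ∨ occursSeq _ _ p S P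
  | _, _, @botR D Γ Δ p, S, P => (Γ = S ∧ (D ::ₘ Δ) = P) ∨ occursSeq _ _ p S P
  | _, _, @andL B D Γ Δ p, S, P => (((B.conj D) ::ₘ Γ) = S ∧ Δ = P) ∨ occursSeq _ _ p S P
  | _, _, @andR B D Γ Δ p q, S, P =>
      (Γ = S ∧ ((B.conj D) ::ₘ Δ) = P) ∨ occursSeq _ _ p S P ∨ occursSeq _ _ q S P
  | _, _, @orL B D Γ Δ p q, S, P =>
      (((B.disj D) ::ₘ Γ) = S ∧ Δ = P) ∨ occursSeq _ _ p S P ∨ occursSeq _ _ q S P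
  | _, _, @orR1 B D Γ Δ p, S, P => (Γ = S ∧ ((B.disj D) ::ₘ Δ) = P) ∨ occursSeq _ _ p S P
  | _, _, @orR2 B D Γ Δ p, S, P => (Γ = S ∧ ((B.disj D) ::ₘ Δ) = P) ∨ occursSeq _ _ p S P
  | _, _, @impL B D Γ Δ Θ p q, S, P =>
      (((B.imp D) ::ₘ Γ) = S ∧ (Δ + Θ) = P) ∨ occursSeq _ _ p S P ∨ occursSeq _ _ q S P
  | _, _, @impR B D Γ Δ p, S, P => (Γ = S ∧ ((B.imp D) ::ₘ Δ) = P) ∨ occursSeq _ _ p S P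
  | _, _, @allL B Γ Δ _ p, S, P => (((Fm.all B) ::ₘ Γ) = S ∧ Δ = P) ∨ occursSeq _ _ p S P
  | _, _, @exR B Γ Δ _ p, S, P => (Γ = S ∧ ((Fm.ex B) ::ₘ Δ) = P) ∨ occursSeq _ _ p S P
  | _, _, @exL B Γ Δ _ _ p, S, P => (((Fm.ex B) ::ₘ Γ) = S ∧ Δ = P) ∨ occursSeq _ _ p S P
  | _, _, @allR B Γ Δ _ _ p, S, P => (Γ = S ∧ ((Fm.all B) ::ₘ Δ) = P) ∨ occursSeq _ _ p S P

/-- `hasImpR p B S P D` holds when an ⊃-R rule with upper sequent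
`B,S → P,D` and lower sequent `S → P,B⊃D` occurs in the proof `p`. -/
def hasImpR : ∀ (Γ Δ : Multiset Fm), CProof Γ Δ → Fm → Multiset Fm → Multiset Fm → Fm → Prop
  | _, _, ax _, _, _, _, _ => False
  | _, _, contrL p, B, S, P, D => hasImpR _ _ p B S P D
  | _, _, contrR p, B, S, P, D => hasImpR _ _ p B S P D
  | _, _, botR p, B, S, P, D => hasImpR _ _ p B S P D
  | _, _, andL p, B, S, P, D => hasImpR _ _ p B S P D
  | _, _, andR p q, B, S, P, D => hasImpR _ _ p B S P D ∨ hasImpR _ _ q B S P D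
  | _, _, orL p q, B, S, P, D => hasImpR _ _ p B S P D ∨ hasImpR _ _ q B S P D
  | _, _, orR1 p, B, S, P, D => hasImpR _ _ p B S P D
  | _, _, orR2 p, B, S, P, D => hasImpR _ _ p B S P D
  | _, _, impL p q, B, S, P, D => hasImpR _ _ p B S P D ∨ hasImpR _ _ q B S P D
  | _, _, @impR B' D' Γ' Δ' p, B, S, P, D =>
      (B' = B ∧ Γ' = S ∧ Δ' = P ∧ D' = D) ∨ hasImpR _ _ p B S P D
  | _, _, allL _ p, B, S, P, D => hasImpR _ _ p B S P D
  | _, _, exR _ p, B, S, P, D => hasImpR _ _ p B S P D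
  | _, _, exL _ _ p, B, S, P, D => hasImpR _ _ p B S P D
  | _, _, allR _ _ p, B, S, P, D => hasImpR _ _ p B S P D

/-- `hasOrL p B D S P` holds when an ∨-L rule with upper sequents
`B,S → P` and `D,S → P` and lower sequent `B∨D,S → P` occurs in `p`. -/
def hasOrL : ∀ (Γ Δ : Multiset Fm), CProof Γ Δ → Fm → Fm → Multiset Fm → Multiset Fm → Prop
  | _, _, ax _, _, _, _, _ => False
  | _, _, contrL p, B, D, S, P => hasOrL _ _ p B D S P
  | _, _, contrR p, B, D, S, P => hasOrL _ _ p B D S P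
  | _, _, botR p, B, D, S, P => hasOrL _ _ p B D S P
  | _, _, andL p, B, D, S, P => hasOrL _ _ p B D S P
  | _, _, andR p q, B, D, S, P => hasOrL _ _ p B D S P ∨ hasOrL _ _ q B D S P
  | _, _, @orL B' D' Γ' Δ' p q, B, D, S, P =>
      (B' = B ∧ D' = D ∧ Γ' = S ∧ Δ' = P) ∨ hasOrL _ _ p B D S P ∨ hasOrL _ _ q B D S P
  | _, _, orR1 p, B, D, S, P => hasOrL _ _ p B D S P
  | _, _, orR2 p, B, D, S, P => hasOrL _ _ p B D S P
  | _, _, impL p q, B, D, S, P => hasOrL _ _ p B D S P ∨ hasOrL _ _ q B D S P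
  | _, _, impR p, B, D, S, P => hasOrL _ _ p B D S P
  | _, _, allL _ p, B, D, S, P => hasOrL _ _ p B D S P
  | _, _, exR _ p, B, D, S, P => hasOrL _ _ p B D S P
  | _, _, exL _ _ p, B, D, S, P => hasOrL _ _ p B D S P
  | _, _, allR _ _ p, B, D, S, P => hasOrL _ _ p B D S P

/-- Every formula in `Δ` is atomic or ⊥. -/
def neutralM (Δ : Multiset Fm) : Prop := ∀ F ∈ Δ, F.neutral

/-- A uniform proof: an I-proof in which any sequent whose succedent contains
a non-atomic formula occurs only as the lower sequent of an inference rule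
that introduces the top-level logical symbol of that formula. -/
def isUniform : ∀ (Γ Δ : Multiset Fm), CProof Γ Δ → Prop
  | _, _, @ax _ Δ _ => Multiset.card Δ = 1
  | _, _, @contrL _ _ Δ p => Multiset.card Δ = 1 ∧ neutralM Δ ∧ isUniform _ _ p
  | _, _, @contrR B _ Δ p =>
      Multiset.card (B ::ₘ Δ) = 1 ∧ neutralM (B ::ₘ Δ) ∧ isUniform _ _ p
  | _, _, @botR D _ Δ p =>
      Multiset.card (D ::ₘ Δ) = 1 ∧ neutralM (D ::ₘ Δ) ∧ isUniform _ _ p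
  | _, _, @andL _ _ _ Δ p => Multiset.card Δ = 1 ∧ neutralM Δ ∧ isUniform _ _ p
  | _, _, @andR B D _ Δ p q =>
      Multiset.card ((B.conj D) ::ₘ Δ) = 1 ∧ isUniform _ _ p ∧ isUniform _ _ q
  | _, _, @orL _ _ _ Δ p q =>
      Multiset.card Δ = 1 ∧ neutralM Δ ∧ isUniform _ _ p ∧ isUniform _ _ q
  | _, _, @orR1 B D _ Δ p => Multiset.card ((B.disj D) ::ₘ Δ) = 1 ∧ isUniform _ _ p
  | _, _, @orR2 B D _ Δ p => Multiset.card ((B.disj D) ::ₘ Δ) = 1 ∧ isUniform _ _ p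
  | _, _, @impL _ _ _ Δ Θ p q =>
      Multiset.card (Δ + Θ) = 1 ∧ neutralM (Δ + Θ) ∧ isUniform _ _ p ∧ isUniform _ _ q
  | _, _, @impR B D _ Δ p => Multiset.card ((B.imp D) ::ₘ Δ) = 1 ∧ isUniform _ _ p
  | _, _, @allL _ _ Δ _ p => Multiset.card Δ = 1 ∧ neutralM Δ ∧ isUniform _ _ p
  | _, _, @exR B _ Δ _ p => Multiset.card ((Fm.ex B) ::ₘ Δ) = 1 ∧ isUniform _ _ p
  | _, _, @exL _ _ Δ _ _ p => Multiset.card Δ = 1 ∧ neutralM Δ ∧ isUniform _ _ p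
  | _, _, @allR B _ Δ _ _ p => Multiset.card ((Fm.all B) ::ₘ Δ) = 1 ∧ isUniform _ _ p

end CProof

/-- Uniform provability: `Γ ⊢_O F`. -/
def UProv (Γ : Multiset Fm) (F : Fm) : Prop :=
  ∃ p : CProof Γ ({F} : Multiset Fm), p.isUniform

/-- The ordering ⪰ measuring the strength of formulas as assumptions. -/
inductive Fm.ge : Fm → Fm → Prop
  | refl (F : Fm) : Fm.ge F F
  | imp {F A B : Fm} : Fm.ge F B → Fm.ge F (Fm.imp A B)
  | disjl {F A B : Fm} : Fm.ge F A → Fm.ge F (Fm.disj A B)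
  | disjr {F A B : Fm} : Fm.ge F B → Fm.ge F (Fm.disj A B)
  | ex {F P : Fm} (c : ℕ) : Fm.ge F (P.inst (Tm.const c)) → Fm.ge F (Fm.ex P)

/-- `MsGe Γ₁ Γ₂`: there is an injective map κ from `Γ₂` into `Γ₁` with
`κ(F) ⪰ F` for every `F ∈ Γ₂`. -/
def MsGe (Γ₁ Γ₂ : Multiset Fm) : Prop :=
  ∃ Γ' ≤ Γ₁, Multiset.Rel Fm.ge Γ' Γ₂

mutual
  /-- G-formulas: G ::= ⊤ | ⊥ | A | G∧G | G∨G | D⊃G | ∃x G. -/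
  inductive GFm : Fm → Prop
    | top : GFm Fm.top
    | bot : GFm Fm.bot
    | atom {p : ℕ} {ts : List Tm} : GFm (Fm.atom p ts)
    | conj {a b : Fm} : GFm a → GFm b → GFm (Fm.conj a b)
    | disj {a b : Fm} : GFm a → GFm b → GFm (Fm.disj a b)
    | imp {a b : Fm} : DFm a → GFm b → GFm (Fm.imp a b)
    | ex {a : Fm} : GFm a → GFm (Fm.ex a)

  /-- D-formulas: D ::= ⊤ | ⊥ | A | G⊃D | D∧D | D∨D | ∃x D | ∀x D. -/
  inductive DFm : Fm → Prop
    | top : DFm Fm.top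
    | bot : DFm Fm.bot
    | atom {p : ℕ} {ts : List Tm} : DFm (Fm.atom p ts)
    | imp {a b : Fm} : GFm a → DFm b → DFm (Fm.imp a b)
    | conj {a b : Fm} : DFm a → DFm b → DFm (Fm.conj a b)
    | disj {a b : Fm} : DFm a → DFm b → DFm (Fm.disj a b)
    | ex {a : Fm} : DFm a → DFm (Fm.ex a)
    | all {a : Fm} : DFm a → DFm (Fm.all a)
end
/-- I_G-proofs: derivations in the intuitionistic sequent calculus (single
succedent formula) augmented with the derived rules ∨-L_G and res_G, in which
the eigenvariable proviso on ∃-L and ∀-R also disallows constants in `G`. -/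
inductive IGProof (G : Fm) : Multiset Fm → Fm → Type
  | ax {Γ : Multiset Fm} {F : Fm} (h : AxSeq Γ ({F} : Multiset Fm)) : IGProof G Γ F
  | contrL {B : Fm} {Γ : Multiset Fm} {F : Fm} (p : IGProof G (B ::ₘ B ::ₘ Γ) F) :
      IGProof G (B ::ₘ Γ) F
  | botR {Γ : Multiset Fm} {F : Fm} (p : IGProof G Γ Fm.bot) : IGProof G Γ F
  | andL {B D : Fm} {Γ : Multiset Fm} {F : Fm}
      (p : IGProof G (B ::ₘ D ::ₘ (B.conj D) ::ₘ Γ) F) : IGProof G ((B.conj D) ::ₘ Γ) F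
  | andR {B D : Fm} {Γ : Multiset Fm} (p : IGProof G Γ B) (q : IGProof G Γ D) :
      IGProof G Γ (B.conj D)
  | orL {B D : Fm} {Γ : Multiset Fm} {F : Fm} (p : IGProof G (B ::ₘ Γ) F)
      (q : IGProof G (D ::ₘ Γ) F) : IGProof G ((B.disj D) ::ₘ Γ) F
  | orR1 {B D : Fm} {Γ : Multiset Fm} (p : IGProof G Γ B) : IGProof G Γ (B.disj D)
  | orR2 {B D : Fm} {Γ : Multiset Fm} (p : IGProof G Γ D) : IGProof G Γ (B.disj D)
  | impL {B D : Fm} {Γ : Multiset Fm} {F : Fm} (p : IGProof G ((B.imp D) ::ₘ Γ) B)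
      (q : IGProof G (D ::ₘ Γ) F) : IGProof G ((B.imp D) ::ₘ Γ) F
  | impR {B D : Fm} {Γ : Multiset Fm} (p : IGProof G (B ::ₘ Γ) D) : IGProof G Γ (B.imp D)
  | allL {B : Fm} {Γ : Multiset Fm} {F : Fm} (t : Tm)
      (p : IGProof G ((B.inst t) ::ₘ (Fm.all B) ::ₘ Γ) F) : IGProof G ((Fm.all B) ::ₘ Γ) F
  | exR {B : Fm} {Γ : Multiset Fm} (t : Tm) (p : IGProof G Γ (B.inst t)) :
      IGProof G Γ (Fm.ex B)
  | exL {B : Fm} {Γ : Multiset Fm} {F : Fm} (c : ℕ)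
      (hc : FreshSeq c ((Fm.ex B) ::ₘ Γ) ({F} : Multiset Fm)) (hG : ¬ G.constIn c)
      (p : IGProof G ((B.inst (Tm.const c)) ::ₘ Γ) F) : IGProof G ((Fm.ex B) ::ₘ Γ) F
  | allR {B : Fm} {Γ : Multiset Fm} (c : ℕ)
      (hc : FreshSeq c Γ ({Fm.all B} : Multiset Fm)) (hG : ¬ G.constIn c)
      (p : IGProof G Γ (B.inst (Tm.const c))) : IGProof G Γ (Fm.all B)
  | orLG {B D : Fm} {Γ : Multiset Fm} {F : Fm} (p : IGProof G (B ::ₘ Γ) F)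
      (q : IGProof G (D ::ₘ Γ) G) : IGProof G ((B.disj D) ::ₘ Γ) F
  | resG {Γ : Multiset Fm} {F : Fm} (p : IGProof G Γ G) : IGProof G Γ F

namespace IGProof

/-- The number of occurrences of the ∨-L rule in an I_G-proof. -/
def orLCount : ∀ (G : Fm) (Γ : Multiset Fm) (F : Fm), IGProof G Γ F → ℕ
  | _, _, _, ax _ => 0
  | _, _, _, contrL p => orLCount _ _ _ p
  | _, _, _, botR p => orLCount _ _ _ p
  | _, _, _, andL p => orLCount _ _ _ p
  | _, _, _, andR p q => orLCount _ _ _ p + orLCount _ _ _ q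
  | _, _, _, orL p q => orLCount _ _ _ p + orLCount _ _ _ q + 1
  | _, _, _, orR1 p => orLCount _ _ _ p
  | _, _, _, orR2 p => orLCount _ _ _ p
  | _, _, _, impL p q => orLCount _ _ _ p + orLCount _ _ _ q
  | _, _, _, impR p => orLCount _ _ _ p
  | _, _, _, allL _ p => orLCount _ _ _ p
  | _, _, _, exR _ p => orLCount _ _ _ p
  | _, _, _, exL _ _ _ p => orLCount _ _ _ p
  | _, _, _, allR _ _ _ p => orLCount _ _ _ p
  | _, _, _, orLG p q => orLCount _ _ _ p + orLCount _ _ _ q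
  | _, _, _, resG p => orLCount _ _ _ p

/-- The height of an I_G-proof: the length of its longest branch. -/
def height : ∀ (G : Fm) (Γ : Multiset Fm) (F : Fm), IGProof G Γ F → ℕ
  | _, _, _, ax _ => 1
  | _, _, _, contrL p => height _ _ _ p + 1
  | _, _, _, botR p => height _ _ _ p + 1
  | _, _, _, andL p => height _ _ _ p + 1
  | _, _, _, andR p q => max (height _ _ _ p) (height _ _ _ q) + 1
  | _, _, _, orL p q => max (height _ _ _ p) (height _ _ _ q) + 1
  | _, _, _, orR1 p => height _ _ _ p + 1
  | _, _, _, orR2 p => height _ _ _ p + 1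
  | _, _, _, impL p q => max (height _ _ _ p) (height _ _ _ q) + 1
  | _, _, _, impR p => height _ _ _ p + 1
  | _, _, _, allL _ p => height _ _ _ p + 1
  | _, _, _, exR _ p => height _ _ _ p + 1
  | _, _, _, exL _ _ _ p => height _ _ _ p + 1
  | _, _, _, allR _ _ _ p => height _ _ _ p + 1
  | _, _, _, orLG p q => max (height _ _ _ p) (height _ _ _ q) + 1
  | _, _, _, resG p => height _ _ _ p + 1

/-- The number of sequents appearing in an I_G-proof. -/
def size : ∀ (G : Fm) (Γ : Multiset Fm) (F : Fm), IGProof G Γ F → ℕ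
  | _, _, _, ax _ => 1
  | _, _, _, contrL p => size _ _ _ p + 1
  | _, _, _, botR p => size _ _ _ p + 1
  | _, _, _, andL p => size _ _ _ p + 1
  | _, _, _, andR p q => size _ _ _ p + size _ _ _ q + 1
  | _, _, _, orL p q => size _ _ _ p + size _ _ _ q + 1
  | _, _, _, orR1 p => size _ _ _ p + 1
  | _, _, _, orR2 p => size _ _ _ p + 1
  | _, _, _, impL p q => size _ _ _ p + size _ _ _ q + 1
  | _, _, _, impR p => size _ _ _ p + 1
  | _, _, _, allL _ p => size _ _ _ p + 1
  | _, _, _, exR _ p => size _ _ _ p + 1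
  | _, _, _, exL _ _ _ p => size _ _ _ p + 1
  | _, _, _, allR _ _ _ p => size _ _ _ p + 1
  | _, _, _, orLG p q => size _ _ _ p + size _ _ _ q + 1
  | _, _, _, resG p => size _ _ _ p + 1

/-- O_G-proofs: I_G-proofs containing no occurrence of the ∨-L rule, in which
any sequent whose succedent contains a non-atomic formula occurs only as the
lower sequent of a rule introducing the top-level symbol of that formula. -/
def isOG : ∀ (G : Fm) (Γ : Multiset Fm) (F : Fm), IGProof G Γ F → Prop
  | _, _, _, ax _ => True
  | _, _, _, @contrL _ _ _ F p => F.neutral ∧ isOG _ _ _ p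
  | _, _, _, @botR _ _ F p => F.neutral ∧ isOG _ _ _ p
  | _, _, _, @andL _ _ _ _ F p => F.neutral ∧ isOG _ _ _ p
  | _, _, _, andR p q => isOG _ _ _ p ∧ isOG _ _ _ q
  | _, _, _, orL _ _ => False
  | _, _, _, orR1 p => isOG _ _ _ p
  | _, _, _, orR2 p => isOG _ _ _ p
  | _, _, _, @impL _ _ _ _ F p q => F.neutral ∧ isOG _ _ _ p ∧ isOG _ _ _ q
  | _, _, _, impR p => isOG _ _ _ p
  | _, _, _, @allL _ _ _ F _ p => F.neutral ∧ isOG _ _ _ p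
  | _, _, _, exR _ p => isOG _ _ _ p
  | _, _, _, @exL _ _ _ F _ _ _ p => F.neutral ∧ isOG _ _ _ p
  | _, _, _, allR _ _ _ p => isOG _ _ _ p
  | _, _, _, @orLG _ _ _ _ F p q => F.neutral ∧ isOG _ _ _ p ∧ isOG _ _ _ q
  | _, _, _, @resG _ _ F p => F.neutral ∧ isOG _ _ _ p

/-- `hasOrL p B D S F` holds when an ∨-L rule with upper sequents `B,S → F`
and `D,S → F` and lower sequent `B∨D,S → F` occurs in the I_G-proof `p`. -/
def hasOrL : ∀ (G : Fm) (Γ : Multiset Fm) (W : Fm), IGProof G Γ W →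
    Fm → Fm → Multiset Fm → Fm → Prop
  | _, _, _, ax _, _, _, _, _ => False
  | _, _, _, contrL p, B, D, S, F => hasOrL _ _ _ p B D S F
  | _, _, _, botR p, B, D, S, F => hasOrL _ _ _ p B D S F
  | _, _, _, andL p, B, D, S, F => hasOrL _ _ _ p B D S F
  | _, _, _, andR p q, B, D, S, F => hasOrL _ _ _ p B D S F ∨ hasOrL _ _ _ q B D S F
  | _, _, _, @orL _ B' D' Γ' F' p q, B, D, S, F =>
      (B' = B ∧ D' = D ∧ Γ' = S ∧ F' = F) ∨ hasOrL _ _ _ p B D S F ∨ hasOrL _ _ _ q B D S F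
  | _, _, _, orR1 p, B, D, S, F => hasOrL _ _ _ p B D S F
  | _, _, _, orR2 p, B, D, S, F => hasOrL _ _ _ p B D S F
  | _, _, _, impL p q, B, D, S, F => hasOrL _ _ _ p B D S F ∨ hasOrL _ _ _ q B D S F
  | _, _, _, impR p, B, D, S, F => hasOrL _ _ _ p B D S F
  | _, _, _, allL _ p, B, D, S, F => hasOrL _ _ _ p B D S F
  | _, _, _, exR _ p, B, D, S, F => hasOrL _ _ _ p B D S F
  | _, _, _, exL _ _ _ p, B, D, S, F => hasOrL _ _ _ p B D S F
  | _, _, _, allR _ _ _ p, B, D, S, F => hasOrL _ _ _ p B D S F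
  | _, _, _, orLG p q, B, D, S, F => hasOrL _ _ _ p B D S F ∨ hasOrL _ _ _ q B D S F
  | _, _, _, resG p, B, D, S, F => hasOrL _ _ _ p B D S F

end IGProof

/-- In the simplified syntax, `A` ranges over atomic formulas together with
⊤ and ⊥. -/
def AtFm (F : Fm) : Prop := F.isAtom ∨ F = Fm.top ∨ F = Fm.bot

/-- `disjs A [B₁,…,Bₙ]` is the disjunction `A ∨ B₁ ∨ … ∨ Bₙ`. -/
def disjs (A : Fm) : List Fm → Fm
  | [] => A
  | B :: l => Fm.disj A (disjs B l)

mutual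
  /-- Goals in the simplified syntax: G ::= A | G∧G | G∨G | D⊃G | ∃x G. -/
  inductive Goal : Fm → Prop
    | atm {A : Fm} : AtFm A → Goal A
    | conj {a b : Fm} : Goal a → Goal b → Goal (Fm.conj a b)
    | disj {a b : Fm} : Goal a → Goal b → Goal (Fm.disj a b)
    | imp {a b : Fm} : PCl a → Goal b → Goal (Fm.imp a b)
    | ex {a : Fm} : Goal a → Goal (Fm.ex a)

  /-- Program clauses in the simplified syntax:
  D ::= (A∨…∨A) | G⊃(A∨…∨A) | ∀x D. -/
  inductive PCl : Fm → Prop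
    | head {A : Fm} {l : List Fm} : AtFm A → (∀ B ∈ l, AtFm B) → PCl (disjs A l)
    | impHead {g A : Fm} {l : List Fm} : Goal g → AtFm A → (∀ B ∈ l, AtFm B) →
        PCl (Fm.imp g (disjs A l))
    | all {d : Fm} : PCl d → PCl (Fm.all d)
end

/-- The instances `[D]` of a program clause `D`, as pairs whose first
component is `∅` (`none`) or `{G}` (`some G`) and whose second component is
the collection of head atoms. -/
inductive ClInst : Fm → Option Fm → Multiset Fm → Prop
  | head {A : Fm} {l : List Fm} : AtFm A → (∀ B ∈ l, AtFm B) →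
      ClInst (disjs A l) none (A ::ₘ (l : Multiset Fm))
  | impHead {g A : Fm} {l : List Fm} : Goal g → AtFm A → (∀ B ∈ l, AtFm B) →
      ClInst (Fm.imp g (disjs A l)) (some g) (A ::ₘ (l : Multiset Fm))
  | all {d : Fm} {o : Option Fm} {m : Multiset Fm} (t : Tm) :
      ClInst (d.inst t) o m → ClInst (Fm.all d) o m

/-- `[Γ]`: the instances of the clauses in `Γ`. -/
def GammaInst (Γ : Multiset Fm) (o : Option Fm) (m : Multiset Fm) : Prop :=
  ∃ D ∈ Γ, ClInst D o m

/-- The reduced proof system relative to the goal `G`: axioms `Δ → ⊤`, the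
rules RESTART, ATOMIC and BACKCHAIN relativized to `G`, and ∨-R, ∧-R, ⊃-R
and ∃-R. -/
inductive RP (G : Fm) : Multiset Fm → Fm → Prop
  | topAx {Γ : Multiset Fm} : RP G Γ Fm.top
  | restart {Γ : Multiset Fm} {C : Fm} (hC : C.isAtom ∨ C = Fm.bot) (p : RP G Γ G) :
      RP G Γ C
  | atomic {Γ : Multiset Fm} {C : Fm} {m : Multiset Fm} (hC : C.isAtom ∨ C = Fm.bot)
      (h : GammaInst Γ none (C ::ₘ m) ∨ GammaInst Γ none (Fm.bot ::ₘ m))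
      (ps : ∀ A ∈ m, RP G (A ::ₘ Γ) G) : RP G Γ C
  | backchain {Γ : Multiset Fm} {C G' : Fm} {m : Multiset Fm}
      (hC : C.isAtom ∨ C = Fm.bot)
      (h : GammaInst Γ (some G') (C ::ₘ m) ∨ GammaInst Γ (some G') (Fm.bot ::ₘ m))
      (p : RP G Γ G') (ps : ∀ A ∈ m, RP G (A ::ₘ Γ) G) : RP G Γ C
  | orR1 {Γ : Multiset Fm} {B D : Fm} (p : RP G Γ B) : RP G Γ (B.disj D)
  | orR2 {Γ : Multiset Fm} {B D : Fm} (p : RP G Γ D) : RP G Γ (B.disj D)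
  | andR {Γ : Multiset Fm} {B D : Fm} (p : RP G Γ B) (q : RP G Γ D) : RP G Γ (B.conj D)
  | impR {Γ : Multiset Fm} {B D : Fm} (p : RP G (B ::ₘ Γ) D) : RP G Γ (B.imp D)
  | exR {Γ : Multiset Fm} {B : Fm} (t : Tm) (p : RP G Γ (B.inst t)) : RP G Γ (Fm.ex B)

section Statement9Aux

@[simp] theorem Fm.isAtom_top : ¬ Fm.isAtom Fm.top := id
@[simp] theorem Fm.isAtom_bot : ¬ Fm.isAtom Fm.bot := id
@[simp] theorem Fm.isAtom_atom' (p : ℕ) (ts : List Tm) : Fm.isAtom (Fm.atom p ts) := trivial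
@[simp] theorem Fm.isAtom_conj (a b : Fm) : ¬ Fm.isAtom (a.conj b) := id
@[simp] theorem Fm.isAtom_disj (a b : Fm) : ¬ Fm.isAtom (a.disj b) := id
@[simp] theorem Fm.isAtom_imp (a b : Fm) : ¬ Fm.isAtom (a.imp b) := id
@[simp] theorem Fm.isAtom_ex (a : Fm) : ¬ Fm.isAtom a.ex := id
@[simp] theorem Fm.isAtom_all (a : Fm) : ¬ Fm.isAtom a.all := id

/-- `p(t)` -/
def pA (P : ℕ) (t : Tm) : Fm := Fm.atom P [t]

/-- `∀x ¬¬p(x)` -/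
def dnF (P : ℕ) : Fm := Fm.all (((pA P (Tm.var 0)).imp Fm.bot).imp Fm.bot)

/-- `∀x p(x)` -/
def apF (P : ℕ) : Fm := Fm.all (pA P (Tm.var 0))

/-- Allowed antecedent formulas. -/
def AForm (P : ℕ) (F : Fm) : Prop :=
  F = (apF P).imp Fm.bot ∨ F = dnF P ∨
    (∃ t, F = ((pA P t).imp Fm.bot).imp Fm.bot) ∨ ∃ t, F = pA P t

/-- Allowed (unprovable) goal formulas relative to the antecedent. -/
def GoalOk (P : ℕ) (Γ : Multiset Fm) (F : Fm) : Prop :=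
  F = Fm.bot ∨ F = apF P ∨ (∃ t, F = (pA P t).imp Fm.bot) ∨ (F.isAtom ∧ F ∉ Γ)

/-- The unprovability invariant. -/
def SInv (P : ℕ) (Γ Δ : Multiset Fm) : Prop :=
  (∀ F ∈ Γ, AForm P F) ∧ ∃ F, Δ = {F} ∧ GoalOk P Γ F

theorem isI_card {Γ Δ : Multiset Fm} (p : CProof Γ Δ) (h : p.isI) :
    Multiset.card Δ = 1 := by
  cases p <;> first | exact h | exact h.1

theorem card_one_cons {B : Fm} {Δ : Multiset Fm}
    (h : Multiset.card (B ::ₘ Δ) = 1) : Δ = 0 := by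
  rw [Multiset.card_cons] at h
  exact Multiset.card_eq_zero.mp (by omega)

theorem noI (P : ℕ) : ∀ {Γ Δ : Multiset Fm} (p : CProof Γ Δ),
    p.isI → SInv P Γ Δ → False := by
  intro Γ Δ p
  induction p with
  | ax h =>
    rintro _ ⟨hA, F, hΔ, hG⟩
    subst hΔ
    rcases h with h | ⟨A, hat, hAΓ, hAΔ⟩
    · rw [Multiset.mem_singleton] at h
      subst h
      rcases hG with h' | h' | ⟨t, h'⟩ | ⟨h', _⟩ <;> simp_all [apF]
    · rw [Multiset.mem_singleton] at hAΔ
      subst hAΔ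
      rcases hG with h' | h' | ⟨t, h'⟩ | ⟨h', hn⟩
      · subst h'
        rcases hA _ hAΓ with h | h | ⟨t, h⟩ | ⟨t, h⟩ <;> simp_all [pA, apF, dnF]
      · subst h'
        rcases hat with hat | hat
        · rw [apF] at hat; exact Fm.noConfusion hat
        · rw [apF] at hat; exact Fm.isAtom_all _ hat
      · subst h'
        rcases hat with hat | hat
        · exact Fm.noConfusion hat
        · exact Fm.isAtom_imp _ _ hat
      · exact hn hAΓ
  | contrL p ih =>
    rintro h ⟨hA, F, hΔ, hG⟩
    refine ih h.2 ⟨?_, F, hΔ, ?_⟩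
    · intro G hG'
      rw [Multiset.mem_cons] at hG'
      rcases hG' with rfl | hG'
      · exact hA _ (Multiset.mem_cons_self _ _)
      · exact hA _ hG'
    · rcases hG with h' | h' | h' | ⟨h', hn⟩
      · exact Or.inl h'
      · exact Or.inr (Or.inl h')
      · exact Or.inr (Or.inr (Or.inl h'))
      · refine Or.inr (Or.inr (Or.inr ⟨h', ?_⟩))
        simp only [Multiset.mem_cons] at hn ⊢
        tauto
  | contrR p ih =>
    intro h _
    have := isI_card _ h.2
    simp [Multiset.card_cons] at this
  | botR p ih =>
    rintro h ⟨hA, F, hΔ, hG⟩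
    have h0 : _ = (0 : Multiset Fm) := card_one_cons h.1
    refine ih h.2 ⟨hA, Fm.bot, by rw [h0, Multiset.cons_zero], Or.inl rfl⟩
  | andL p ih =>
    rintro _ ⟨hA, _⟩
    rcases hA _ (Multiset.mem_cons_self _ _) with h | h | ⟨t, h⟩ | ⟨t, h⟩ <;>
      simp_all [pA, apF, dnF]
  | andR p q ihp ihq =>
    rintro h ⟨hA, F, hΔ, hG⟩
    have h1 := h.1
    have h0 : _ = (0 : Multiset Fm) := card_one_cons h1
    subst h0
    rw [Multiset.cons_zero, Multiset.singleton_inj] at hΔ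
    subst hΔ
    rcases hG with h' | h' | ⟨t, h'⟩ | ⟨h', _⟩ <;> simp_all [apF, Fm.isAtom]
  | orL p q ihp ihq =>
    rintro _ ⟨hA, _⟩
    rcases hA _ (Multiset.mem_cons_self _ _) with h | h | ⟨t, h⟩ | ⟨t, h⟩ <;>
      simp_all [pA, apF, dnF]
  | orR1 p ih =>
    rintro h ⟨hA, F, hΔ, hG⟩
    have h0 : _ = (0 : Multiset Fm) := card_one_cons h.1
    subst h0
    rw [Multiset.cons_zero, Multiset.singleton_inj] at hΔ
    subst hΔ
    rcases hG with h' | h' | ⟨t, h'⟩ | ⟨h', _⟩ <;> simp_all [apF, Fm.isAtom]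
  | orR2 p ih =>
    rintro h ⟨hA, F, hΔ, hG⟩
    have h0 : _ = (0 : Multiset Fm) := card_one_cons h.1
    subst h0
    rw [Multiset.cons_zero, Multiset.singleton_inj] at hΔ
    subst hΔ
    rcases hG with h' | h' | ⟨t, h'⟩ | ⟨h', _⟩ <;> simp_all [apF, Fm.isAtom]
  | @impL B D Γ' Δ' Θ' p q ihp ihq =>
    rintro h ⟨hA, F, hΔ, hG⟩
    have hp := h.2.1
    have h0 : Δ' = 0 := card_one_cons (isI_card _ hp)
    subst h0
    rcases hA _ (Multiset.mem_cons_self _ _) with h' | h' | ⟨t, h'⟩ | ⟨t, h'⟩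
    · rw [Fm.imp.injEq] at h'
      refine ihp hp ⟨hA, B, rfl, Or.inr (Or.inl h'.1)⟩
    · simp [dnF] at h'
    · rw [Fm.imp.injEq] at h'
      refine ihp hp ⟨hA, B, rfl, Or.inr (Or.inr (Or.inl ⟨t, h'.1⟩))⟩
    · simp [pA] at h'
  | @impR B D Γ' Δ' p ih =>
    rintro h ⟨hA, F, hΔ, hG⟩
    have h0 : Δ' = 0 := card_one_cons h.1
    subst h0
    rw [Multiset.cons_zero, Multiset.singleton_inj] at hΔ
    subst hΔ
    rcases hG with h' | h' | ⟨t, h'⟩ | ⟨h', _⟩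
    · simp at h'
    · simp [apF] at h'
    · rw [Fm.imp.injEq] at h'
      obtain ⟨rfl, rfl⟩ := h'
      refine ih h.2 ⟨?_, Fm.bot, rfl, Or.inl rfl⟩
      intro G hG'
      rw [Multiset.mem_cons] at hG'
      rcases hG' with rfl | hG'
      · exact Or.inr (Or.inr (Or.inr ⟨t, rfl⟩))
      · exact hA _ hG'
    · simp [Fm.isAtom] at h'
  | @allL B Γ' Δ' t p ih =>
    rintro h ⟨hA, F, hΔ, hG⟩
    rcases hA _ (Multiset.mem_cons_self _ _) with h' | h' | ⟨s, h'⟩ | ⟨s, h'⟩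
    · simp [apF] at h'
    · rw [dnF, Fm.all.injEq] at h'
      subst h'
      have hinst : (((pA P (Tm.var 0)).imp Fm.bot).imp Fm.bot).inst t
          = ((pA P t).imp Fm.bot).imp Fm.bot := by
        simp [Fm.inst, Fm.subst, pA, Tm.subst]
      refine ih h.2 ⟨?_, F, hΔ, ?_⟩
      · intro G hG'
        rw [Multiset.mem_cons] at hG'
        rcases hG' with rfl | hG'
        · rw [hinst]; exact Or.inr (Or.inr (Or.inl ⟨t, rfl⟩))
        · exact hA _ hG'
      · rcases hG with h' | h' | h' | ⟨h', hn⟩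
        · exact Or.inl h'
        · exact Or.inr (Or.inl h')
        · exact Or.inr (Or.inr (Or.inl h'))
        · refine Or.inr (Or.inr (Or.inr ⟨h', ?_⟩))
          rw [Multiset.mem_cons, hinst]
          rintro (rfl | hm)
          · simp [Fm.isAtom] at h'
          · exact hn hm
    · simp [pA] at h'
    · simp [pA] at h'
  | @exR B Γ' Δ' t p ih =>
    rintro h ⟨hA, F, hΔ, hG⟩
    have h0 : Δ' = 0 := card_one_cons h.1
    subst h0
    rw [Multiset.cons_zero, Multiset.singleton_inj] at hΔ
    subst hΔ
    rcases hG with h' | h' | ⟨s, h'⟩ | ⟨h', _⟩ <;> simp_all [apF, Fm.isAtom]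
  | exL c hc p ih =>
    rintro _ ⟨hA, _⟩
    rcases hA _ (Multiset.mem_cons_self _ _) with h' | h' | ⟨s, h'⟩ | ⟨s, h'⟩ <;>
      simp_all [pA, apF, dnF]
  | @allR B Γ' Δ' c hc p ih =>
    rintro h ⟨hA, F, hΔ, hG⟩
    have h0 : Δ' = 0 := card_one_cons h.1
    subst h0
    rw [Multiset.cons_zero, Multiset.singleton_inj] at hΔ
    subst hΔ
    rcases hG with h' | h' | ⟨s, h'⟩ | ⟨h', _⟩
    · simp at h'
    · rw [apF, Fm.all.injEq] at h'
      subst h'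
      have hinst : (pA P (Tm.var 0)).inst (Tm.const c) = pA P (Tm.const c) := by
        simp [Fm.inst, Fm.subst, pA, Tm.subst]
      refine ih h.2 ⟨hA, pA P (Tm.const c), by rw [hinst, Multiset.cons_zero], ?_⟩
      refine Or.inr (Or.inr (Or.inr ⟨by simp [pA, Fm.isAtom], ?_⟩))
      intro hm
      exact hc.1 _ hm (by simp [pA, Fm.constIn, Tm.constIn])
    · simp at h'
    · simp [Fm.isAtom] at h'

/-- Cast a C-proof along equalities of the endsequent. -/
def cpCast {Γ Γ' Δ Δ' : Multiset Fm} (hΓ : Γ = Γ') (hΔ : Δ = Δ')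
    (p : CProof Γ Δ) : CProof Γ' Δ' := hΓ ▸ hΔ ▸ p

end Statement9Aux

/-- with `p` a unary predicate symbol, the sequent
`∀x((p(x)⊃⊥)⊃⊥) → ∀x p(x)` has a C-proof, but
`(∀x p(x))⊃⊥, ∀x((p(x)⊃⊥)⊃⊥) → ∀x p(x)` has no I-proof. -/
theorem statement_9 (P : ℕ)
    (DN : Fm) (hDN : DN = Fm.all (((Fm.atom P [Tm.var 0]).imp Fm.bot).imp Fm.bot))
    (AllP : Fm) (hAllP : AllP = Fm.all (Fm.atom P [Tm.var 0])) :
    CProv ({DN} : Multiset Fm) AllP ∧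
      ¬ IProv ((AllP.imp Fm.bot) ::ₘ ({DN} : Multiset Fm)) AllP := by
  subst hDN; subst hAllP
  constructor
  · -- the C-proof
    set pc : Fm := Fm.atom P [Tm.const 0] with hpc
    set nn : Fm := (pc.imp Fm.bot).imp Fm.bot with hnn
    set dn : Fm := Fm.all (((Fm.atom P [Tm.var 0]).imp Fm.bot).imp Fm.bot) with hdn
    set ap : Fm := Fm.all (Fm.atom P [Tm.var 0]) with hap
    have ax1 : CProof (pc ::ₘ nn ::ₘ dn ::ₘ 0) (Fm.bot ::ₘ {pc}) :=
      CProof.ax (Or.inr ⟨pc, Or.inr trivial, by simp, by simp⟩)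
    have p1 : CProof (nn ::ₘ dn ::ₘ 0) ((pc.imp Fm.bot) ::ₘ {pc}) :=
      CProof.impR ax1
    have ax2 : CProof (Fm.bot ::ₘ dn ::ₘ 0) (Fm.bot ::ₘ 0) :=
      CProof.ax (Or.inr ⟨Fm.bot, Or.inl rfl, by simp, by simp⟩)
    have q1 : CProof (Fm.bot ::ₘ dn ::ₘ 0) (ap ::ₘ 0) := CProof.botR ax2
    have p2 : CProof (nn ::ₘ dn ::ₘ 0) (({pc} : Multiset Fm) + (ap ::ₘ 0)) :=
      CProof.impL p1 q1
    have p2' : CProof (nn ::ₘ dn ::ₘ 0) (pc ::ₘ ap ::ₘ 0) :=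
      cpCast rfl (by rw [Multiset.singleton_add]) p2
    have hinst1 : (((Fm.atom P [Tm.var 0]).imp Fm.bot).imp Fm.bot).inst (Tm.const 0)
        = nn := by simp [Fm.inst, Fm.subst, Tm.subst, hnn, hpc]
    have p3 : CProof (dn ::ₘ 0) (pc ::ₘ ap ::ₘ 0) :=
      CProof.allL (Tm.const 0) (cpCast (by rw [hinst1]) rfl p2')
    have hinst2 : (Fm.atom P [Tm.var 0]).inst (Tm.const 0) = pc := by
      simp [Fm.inst, Fm.subst, Tm.subst, hpc]
    have hfresh : FreshSeq 0 (dn ::ₘ 0) (ap ::ₘ ap ::ₘ 0) := by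
      constructor <;> intro F hF <;>
        simp only [Multiset.mem_cons, Multiset.notMem_zero, or_false, or_self] at hF
      · subst hF; simp [hdn, Fm.constIn, Tm.constIn]
      · subst hF; simp [hap, Fm.constIn, Tm.constIn]
    have p4 : CProof (dn ::ₘ 0) (ap ::ₘ ap ::ₘ 0) :=
      CProof.allR 0 hfresh (cpCast rfl (by rw [hinst2]) p3)
    have p5 : CProof (dn ::ₘ 0) (ap ::ₘ 0) := CProof.contrR p4
    exact ⟨cpCast (by simp) (by simp) p5⟩
  · rintro ⟨p, hp⟩
    refine noI P p hp ⟨?_, Fm.all (Fm.atom P [Tm.var 0]), rfl, ?_⟩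
    · intro F hF
      simp only [Multiset.mem_cons, Multiset.mem_singleton] at hF
      rcases hF with rfl | rfl
      · exact Or.inl (by simp [apF, pA])
      · exact Or.inr (Or.inl (by simp [dnF, pA]))
    · exact Or.inr (Or.inl (by simp [apF, pA]))
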